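/- arXiv:math/0212245 — 3 statements merged into one kernel-verified Lean document; each statement's English description precedes it below -/
import Mathlib

section
/- Let k be a field with more than two elements, J a finite index set, (V_l)_{l∈J} a family of k-vector spaces, and M a k-linear subspace of ⊕_{l∈J} V_l. Fix two distinct elements i, j ∈ J and suppose that for every family t : J → kˣ with t_i = t_j, the automorphism of ⊕_{l∈J} V_l multiplying the l-th component by t_l maps M into itself. Then M = (M ∩ (V_i ⊕ V_j)) ⊕ ⊕_{l∈J∖{i,j}} (M ∩ V_l), the internal direct sum of its intersection with V_i ⊕ V_j and its intersections with the remaining factors. -/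
section Aux

variable (k : Type*) [Field k] {J : Type*} (V : J → Type*)
  [∀ l, AddCommGroup (V l)] [∀ l, Module k (V l)]

/-- Submodule of functions supported in `s`. -/
def suppSubmodule (s : Set J) : Submodule k (∀ l, V l) where
  carrier := {x | ∀ l ∉ s, x l = 0}
  add_mem' ha hb l hl := by simp [ha l hl, hb l hl]
  zero_mem' l hl := rfl
  smul_mem' c x hx l hl := by simp [hx l hl]

theorem mem_suppSubmodule {s : Set J} {x : ∀ l, V l} :
    x ∈ suppSubmodule k V s ↔ ∀ l ∉ s, x l = 0 := Iff.rfl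

theorem suppSubmodule_mono {s t : Set J} (h : s ⊆ t) :
    suppSubmodule k V s ≤ suppSubmodule k V t :=
  fun x hx l hl => hx l (fun hls => hl (h hls))

theorem range_single_le_supp [DecidableEq J] {s : Set J} {l : J} (hl : l ∈ s) :
    LinearMap.range (LinearMap.single k V l) ≤ suppSubmodule k V s := by
  rintro _ ⟨y, rfl⟩ m hm
  have hml : m ≠ l := fun h => hm (by rw [h]; exact hl)
  exact Pi.single_eq_of_ne hml y

theorem disjoint_suppSubmodule {s t : Set J} (hst : s ∩ t = ∅) :
    Disjoint (suppSubmodule k V s) (suppSubmodule k V t) := by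
  rw [Submodule.disjoint_def]
  intro x hx hx'
  funext l
  by_cases hls : l ∈ s
  · exact hx' l (fun hlt => by
      have : l ∈ s ∩ t := ⟨hls, hlt⟩
      simp [hst] at this)
  · exact hx l hls

end Aux

set_option maxHeartbeats 1000000 in
/-- A subspace of a finite direct sum `⨁ₗ Vₗ` (over a field with more than two elements)
stable under all scaling automorphisms `(tₗ)ₗ ∈ (kˣ)^J` with `tᵢ = tⱼ` decomposes as the
internal direct sum of its intersection with `Vᵢ ⊕ Vⱼ` and its intersections with the
remaining canonical subspaces `Vₗ`, `l ≠ i, j`. -/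
theorem submodule_subtorus_stable_decomposes (k : Type*) [Field k] (hk : 2 < Cardinal.mk k)
    (J : Type*) [Fintype J] [DecidableEq J]
    (V : J → Type*) [∀ l, AddCommGroup (V l)] [∀ l, Module k (V l)]
    (i j : J) (hij : i ≠ j)
    (M : Submodule k (∀ l, V l))
    (hM : ∀ t : J → kˣ, t i = t j → ∀ v ∈ M, (fun l => (t l : k) • v l) ∈ M) :
    (M = (M ⊓ (LinearMap.range (LinearMap.single k V i) ⊔
            LinearMap.range (LinearMap.single k V j)))
        ⊔ (⨆ l : {l : J // l ≠ i ∧ l ≠ j}, M ⊓ LinearMap.range (LinearMap.single k V l))) ∧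
      iSupIndep (fun o : Option {l : J // l ≠ i ∧ l ≠ j} =>
        o.elim
          (M ⊓ (LinearMap.range (LinearMap.single k V i) ⊔
            LinearMap.range (LinearMap.single k V j)))
          (fun l => M ⊓ LinearMap.range (LinearMap.single k V l))) := by
  -- there exists c ≠ 0, c ≠ 1
  obtain ⟨c, hc0, hc1⟩ : ∃ c : k, c ≠ 0 ∧ c ≠ 1 := by
    by_contra h
    push_neg at h
    have huniv : (Set.univ : Set k) = {0, 1} := by
      ext x
      simp only [Set.mem_univ, true_iff, Set.mem_insert_iff, Set.mem_singleton_iff]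
      by_cases hx : x = 0
      · exact Or.inl hx
      · exact Or.inr (h x hx)
    have : Cardinal.mk k ≤ 2 := by
      calc Cardinal.mk k = Cardinal.mk (Set.univ : Set k) := (@Cardinal.mk_univ k).symm
        _ = Cardinal.mk ({0, 1} : Set k) := by rw [huniv]
        _ ≤ Cardinal.mk ({1} : Set k) + 1 := Cardinal.mk_insert_le
        _ = 1 + 1 := by rw [Cardinal.mk_singleton]
        _ = 2 := one_add_one_eq_two
    exact absurd hk (not_lt.mpr this)
  -- the key lemma: single components (away from i, j) of elements of M are in M
  have key : ∀ l₀ : J, l₀ ≠ i → l₀ ≠ j → ∀ v ∈ M, Pi.single l₀ (v l₀) ∈ M := by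
    intro l₀ hl₀i hl₀j v hv
    set u : kˣ := Units.mk0 c hc0 with hu
    set t : J → kˣ := fun l => if l = l₀ then u else 1 with ht
    have hti : t i = t j := by simp [ht, if_neg hl₀i.symm, if_neg hl₀j.symm]
    have hw := hM t hti v hv
    have hsub : (fun l => (t l : k) • v l) - v = Pi.single l₀ ((c - 1) • v l₀) := by
      funext l
      by_cases hl : l = l₀
      · subst hl
        simp [ht, hu, Pi.single_eq_same, sub_smul]
      · simp [ht, hl, Pi.single_eq_of_ne hl]
    have hmem : Pi.single l₀ ((c - 1) • v l₀) ∈ M := hsub ▸ sub_mem hw hv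
    have hc1' : c - 1 ≠ 0 := sub_ne_zero.mpr hc1
    have heq : Pi.single l₀ (v l₀) = (c - 1)⁻¹ • Pi.single l₀ ((c - 1) • v l₀) := by
      rw [← Pi.single_smul, smul_smul, inv_mul_cancel₀ hc1', one_smul]
    rw [heq]
    exact M.smul_mem _ hmem
  constructor
  · apply le_antisymm
    · intro v hv
      set S : Finset J := Finset.univ.filter (fun l => l ≠ i ∧ l ≠ j) with hS
      have hbM : ∀ l ∈ S, Pi.single l (v l) ∈ M := by
        intro l hl
        simp only [hS, Finset.mem_filter, Finset.mem_univ, true_and] at hl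
        exact key l hl.1 hl.2 v hv
      set b : ∀ l, V l := ∑ l ∈ S, Pi.single l (v l) with hb
      have hbmem : b ∈ ⨆ l : {l : J // l ≠ i ∧ l ≠ j},
          M ⊓ LinearMap.range (LinearMap.single k V l) := by
        refine Submodule.sum_mem _ (fun l hl => ?_)
        have hl' : l ≠ i ∧ l ≠ j := by
          simpa only [hS, Finset.mem_filter, Finset.mem_univ, true_and] using hl
        exact Submodule.mem_iSup_of_mem ⟨l, hl'⟩ ⟨hbM l hl, ⟨v l, rfl⟩⟩
      have hbMmem : b ∈ M := Submodule.sum_mem _ hbM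
      have hfilter : Finset.univ.filter (fun l => ¬(l ≠ i ∧ l ≠ j)) = {i, j} := by
        ext l
        simp only [Finset.mem_filter, Finset.mem_univ, true_and, not_and_or, not_not,
          Finset.mem_insert, Finset.mem_singleton]
      have hsplit : b + ∑ l ∈ ({i, j} : Finset J), Pi.single l (v l) = v := by
        rw [hb, ← hfilter, Finset.sum_filter_add_sum_filter_not]
        exact Finset.univ_sum_single v
      have hasupp : v - b = ∑ l ∈ ({i, j} : Finset J), Pi.single l (v l) :=
        (eq_sub_of_add_eq' hsplit).symm
      have hvab : v = (v - b) + b := by rw [sub_add_cancel]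
      rw [hvab]
      refine Submodule.add_mem_sup ⟨sub_mem hv hbMmem, ?_⟩ hbmem
      rw [hasupp, Finset.sum_pair hij]
      exact Submodule.add_mem_sup ⟨v i, rfl⟩ ⟨v j, rfl⟩
    · exact sup_le inf_le_left (iSup_le fun l => inf_le_left)
  · set Sset : Option {l : J // l ≠ i ∧ l ≠ j} → Set J :=
      fun o => o.elim {i, j} (fun l => {l.1}) with hSset
    have hle : ∀ o : Option {l : J // l ≠ i ∧ l ≠ j},
        o.elim
          (M ⊓ (LinearMap.range (LinearMap.single k V i) ⊔
            LinearMap.range (LinearMap.single k V j)))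
          (fun l => M ⊓ LinearMap.range (LinearMap.single k V l))
        ≤ suppSubmodule k V (Sset o) := by
      intro o
      cases o with
      | none =>
        exact inf_le_right.trans (sup_le
          (range_single_le_supp k V (by simp [hSset]))
          (range_single_le_supp k V (by simp [hSset])))
      | some l =>
        exact inf_le_right.trans (range_single_le_supp k V (by simp [hSset]))
    have hsub : ∀ o o' : Option {l : J // l ≠ i ∧ l ≠ j}, o' ≠ o →
        Sset o' ⊆ (Sset o)ᶜ := by
      intro o o' ho'
      match o, o' with
      | none, none => exact absurd rfl ho'
      | none, some l =>
        intro x hx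
        simp only [hSset, Option.elim, Set.mem_singleton_iff] at hx
        subst hx
        simp only [hSset, Option.elim, Set.mem_compl_iff, Set.mem_insert_iff,
          Set.mem_singleton_iff, not_or]
        exact ⟨l.2.1, l.2.2⟩
      | some l, none =>
        intro x hx
        simp only [hSset, Option.elim, Set.mem_insert_iff, Set.mem_singleton_iff] at hx
        simp only [hSset, Option.elim, Set.mem_compl_iff, Set.mem_singleton_iff]
        rcases hx with rfl | rfl
        · exact fun h => l.2.1 h.symm
        · exact fun h => l.2.2 h.symm
      | some l, some m =>
        intro x hx
        simp only [hSset, Option.elim, Set.mem_singleton_iff] at hx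
        subst hx
        simp only [hSset, Option.elim, Set.mem_compl_iff, Set.mem_singleton_iff]
        exact fun h => ho' (by rw [Option.some_inj]; exact Subtype.ext h)
    intro o
    refine Disjoint.mono (hle o) ?_
      (disjoint_suppSubmodule k V (Set.inter_compl_self _))
    exact iSup₂_le fun o' ho' => (hle o').trans (suppSubmodule_mono k V (hsub o o' ho'))
end

section
/- Let r ≥ 1 be an integer and let P(t) = Σ_d p_d t^d be a polynomial with coefficients p_d ∈ ℚ[ℤ^r]. Then the element P(t₁ + ⋯ + t_r) of the polynomial ring ℚ[ℤ^r][t₁,…,t_r] lies in the sum Σ_{ρ=1}^{r} (1−τ_ρ)·ℚ[ℤ^r][t₁,…,t̂_ρ,…,t_r] (where ℚ[ℤ^r][t₁,…,t̂_ρ,…,t_r] denotes the subring of polynomials not involving the variable t_ρ) if and only if p_d ∈ J_d for every 0 ≤ d ≤ r−1 and p_d = 0 for every d ≥ r. -/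
/-- `τ_ρ`, the group-algebra element of the `ρ`-th standard basis vector of `ℤ^r`,
in `ℚ[ℤ^r]`. -/
noncomputable def tauGen (r : ℕ) (ρ : Fin r) : AddMonoidAlgebra ℚ (Fin r → ℤ) :=
  AddMonoidAlgebra.single (Pi.single ρ (1 : ℤ)) (1 : ℚ)

/-- The ideal `J_d = ⋂_{R ⊆ {1,…,r}, |R| = r-d} I_R` of `ℚ[ℤ^r]`, where `I_R` is the
ideal generated by `{1 - τ_ρ : ρ ∈ R}`. -/
noncomputable def Jd (r d : ℕ) : Ideal (AddMonoidAlgebra ℚ (Fin r → ℤ)) :=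
  ⨅ (R : Finset (Fin r)) (_ : R.card = r - d),
    Ideal.span ((fun ρ => 1 - tauGen r ρ) '' ↑R)

/-!
The coefficient of `t^m` in `P(t₁ + ⋯ + t_r)` is `multinomial(m) · p_{|m|}`, and a polynomial lies
in `Σ_ρ (1 - τ_ρ)·ℚ[ℤ^r][t₁,…,t̂_ρ,…,t_r]` exactly when its coefficient of each `t^m` lies in the
ideal generated by the `1 - τ_ρ` with `m ρ = 0`. Multinomial coefficients are units over `ℚ`, and
for `r ≥ 1` the zero sets of the exponents `m` with `|m| = d` are exactly the sets containing
`r - d` elements or more, so the condition on `p_d` is `p_d ∈ J_d`; when `d ≥ r` this ideal is `0`.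
-/

open MvPolynomial

namespace MvPolynomial

section Decomposition

variable {σ A : Type*} [Fintype σ] [CommSemiring A] (a : σ → A)

theorem coeff_sum_C_mul_mem_span {q : σ → MvPolynomial σ A}
    (hq : ∀ ρ, ∀ m ∈ (q ρ).support, m ρ = 0) (m : σ →₀ ℕ) :
    coeff m (∑ ρ, C (a ρ) * q ρ) ∈ Ideal.span (a '' {ρ | m ρ = 0}) := by
  rw [coeff_sum]
  refine Ideal.sum_mem _ fun ρ _ => ?_
  rw [coeff_C_mul]
  by_cases hρ : m ρ = 0
  · exact Ideal.mul_mem_right _ _ (Ideal.subset_span ⟨ρ, hρ, rfl⟩)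
  · rw [notMem_support_iff.mp fun hm => hρ (hq ρ m hm), mul_zero]
    exact zero_mem _

theorem exists_eq_sum_C_mul_of_coeff_mem_span {f : MvPolynomial σ A}
    (hf : ∀ m, coeff m f ∈ Ideal.span (a '' {ρ | m ρ = 0})) :
    ∃ q : σ → MvPolynomial σ A,
      (∀ ρ, ∀ m ∈ (q ρ).support, m ρ = 0) ∧ f = ∑ ρ, C (a ρ) * q ρ := by
  classical
  choose c hc_supp hc using fun m => (Finsupp.mem_span_image_iff_linearCombination A).mp (hf m)
  let q ρ : MvPolynomial σ A := ∑ m ∈ f.support, monomial m (c m ρ)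
  have coeff_q ρ m : coeff m (q ρ) = if m ∈ f.support then c m ρ else 0 := by
    simp only [q, coeff_sum, coeff_monomial, Finset.sum_ite_eq']
  refine ⟨q, fun ρ m hm => ?_, ?_⟩
  · rw [mem_support_iff, coeff_q] at hm
    split_ifs at hm
    · exact (Finsupp.mem_supported A _).mp (hc_supp m) (Finsupp.mem_support_iff.mpr hm)
    · exact absurd rfl hm
  · ext m
    simp only [coeff_sum, coeff_C_mul, coeff_q, mul_ite, mul_zero]
    split_ifs with hm
    · rw [← hc, Finsupp.linearCombination_apply, Finsupp.sum_fintype _ _ (by simp)]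
      simp only [smul_eq_mul, mul_comm]
    · simp [notMem_support_iff.mp hm]

theorem exists_eq_sum_C_mul_iff_coeff_mem_span (f : MvPolynomial σ A) :
    (∃ q : σ → MvPolynomial σ A,
        (∀ ρ, ∀ m ∈ (q ρ).support, m ρ = 0) ∧ f = ∑ ρ, C (a ρ) * q ρ) ↔
      ∀ m, coeff m f ∈ Ideal.span (a '' {ρ | m ρ = 0}) :=
  ⟨fun ⟨_, hq, hf⟩ m => hf ▸ coeff_sum_C_mul_mem_span a hq m,
    exists_eq_sum_C_mul_of_coeff_mem_span a⟩

end Decomposition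

theorem coeff_aeval_sum_X {σ A : Type*} [Fintype σ] [CommSemiring A]
    (P : Polynomial A) (m : σ →₀ ℕ) :
    coeff m (Polynomial.aeval (∑ ρ, X ρ : MvPolynomial σ A) P) =
      m.multinomial * P.coeff m.degree := by
  rw [Polynomial.aeval_eq_sum_range' (n := P.natDegree + m.degree + 1) (by omega), coeff_sum]
  have hdeg : (m.sum fun _ k => k) = m.degree := rfl
  simp only [coeff_smul, coeff_sum_X_pow_of_fintype, hdeg, smul_eq_mul, Nat.cast_ite,
    Nat.cast_zero, mul_ite, mul_zero]
  rw [Finset.sum_ite_eq, if_pos (by simp), mul_comm]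

end MvPolynomial

theorem Ideal.natCast_mul_mem_iff {A : Type*} [CommRing A] [Algebra ℚ A] {I : Ideal A}
    {n : ℕ} (hn : n ≠ 0) {x : A} : (n : A) * x ∈ I ↔ x ∈ I := by
  refine I.unit_mul_mem_iff_mem ?_
  rw [← map_natCast (algebraMap ℚ A)]
  exact (Nat.cast_ne_zero.mpr hn).isUnit.map _

theorem Finsupp.exists_degree_eq_and_setOf_eq_zero_eq {σ : Type*} (S : Finset σ) {k : ℕ}
    (hk : S.card ≤ k) (hS : S = ∅ → k = 0) :
    ∃ m : σ →₀ ℕ, m.degree = k ∧ {ρ | m ρ = 0} = (↑S)ᶜ := by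
  classical
  rcases S.eq_empty_or_nonempty with rfl | ⟨ρ₀, hρ₀⟩
  · exact ⟨0, by simp [hS rfl], by ext; simp⟩
  · refine ⟨∑ ρ ∈ S, single ρ 1 + single ρ₀ (k - S.card), ?_, ?_⟩
    · simp only [map_add, map_sum, degree_single, Finset.sum_const, smul_eq_mul, mul_one]
      omega
    · ext ρ
      simp only [Set.mem_ofPred_eq, add_apply, finsetSum_apply, single_apply, Finset.sum_ite_eq']
      by_cases hρ : ρ ∈ S
      · simp [hρ]
      · simp [hρ, ne_of_mem_of_not_mem hρ₀ hρ]

theorem Finsupp.card_support_le_degree {σ : Type*} (m : σ →₀ ℕ) : m.support.card ≤ m.degree :=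
  calc m.support.card = m.support.card • 1 := by simp
    _ ≤ ∑ ρ ∈ m.support, m ρ :=
      Finset.card_nsmul_le_sum _ _ _ fun _ hρ => Nat.one_le_iff_ne_zero.mpr (by simpa using hρ)
    _ = m.degree := m.degree_apply.symm

theorem forall_card_eq_mem_span_image_iff_forall_degree_eq {σ A : Type*} [Fintype σ]
    [Nonempty σ] [CommSemiring A] (a : σ → A) (p : A) (d : ℕ) :
    (∀ R : Finset σ, R.card = Fintype.card σ - d → p ∈ Ideal.span (a '' R)) ↔
      ∀ m : σ →₀ ℕ, m.degree = d → p ∈ Ideal.span (a '' {ρ | m ρ = 0}) := by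
  classical
  constructor
  · intro h m hm
    have hsupp := hm ▸ m.card_support_le_degree
    obtain ⟨R, hRsub, hRcard⟩ := Finset.exists_subset_card_eq
      (show Fintype.card σ - d ≤ m.supportᶜ.card by rw [Finset.card_compl]; omega)
    refine Ideal.span_mono (Set.image_mono fun ρ hρ => ?_) (h R hRcard)
    simpa using hRsub hρ
  · intro h R hR
    have := Fintype.card_pos (α := σ)
    obtain ⟨m, hm, hzeros⟩ := Finsupp.exists_degree_eq_and_setOf_eq_zero_eq Rᶜ (k := d)
      (by rw [Finset.card_compl]; omega)
      fun hRc => by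
        rw [Finset.compl_eq_empty_iff] at hRc
        rw [hRc, Finset.card_univ] at hR
        omega
    simpa [hzeros] using h m hm

theorem mem_Jd_iff {r : ℕ} (hr : 1 ≤ r) (p : AddMonoidAlgebra ℚ (Fin r → ℤ)) (d : ℕ) :
    p ∈ Jd r d ↔ ∀ m : Fin r →₀ ℕ, m.degree = d →
      p ∈ Ideal.span ((fun ρ => 1 - tauGen r ρ) '' {ρ | m ρ = 0}) := by
  have : Nonempty (Fin r) := ⟨⟨0, hr⟩⟩
  simp only [Jd, Ideal.mem_iInf, ← forall_card_eq_mem_span_image_iff_forall_degree_eq,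
    Fintype.card_fin]

theorem Jd_eq_bot {r d : ℕ} (hd : r ≤ d) : Jd r d = ⊥ := by
  refine eq_bot_iff.mpr fun p hp => ?_
  have := Ideal.mem_iInf.mp (Ideal.mem_iInf.mp hp ∅) (by rw [Finset.card_empty]; omega)
  simpa using this

/-- `P(t₁ + ⋯ + t_r)` lies in `Σ_ρ (1-τ_ρ)·ℚ[ℤ^r][t₁,…,t̂_ρ,…,t_r]` if and only if the
coefficient `p_d` of `P` lies in `J_d` for all `d < r` and vanishes for all `d ≥ r`. -/
theorem mem_sum_iff_coeff_mem_Jd (r : ℕ) (hr : 1 ≤ r)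
    (P : Polynomial (AddMonoidAlgebra ℚ (Fin r → ℤ))) :
    (∃ q : Fin r → MvPolynomial (Fin r) (AddMonoidAlgebra ℚ (Fin r → ℤ)),
        (∀ ρ : Fin r, ∀ m ∈ (q ρ).support, m ρ = 0) ∧
        Polynomial.aeval (∑ ρ : Fin r, MvPolynomial.X ρ) P =
          ∑ ρ : Fin r, MvPolynomial.C (1 - tauGen r ρ) * q ρ) ↔
      ((∀ d, d < r → P.coeff d ∈ Jd r d) ∧ ∀ d, r ≤ d → P.coeff d = 0) := by
  rw [exists_eq_sum_C_mul_iff_coeff_mem_span (fun ρ => 1 - tauGen r ρ)]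
  simp_rw [coeff_aeval_sum_X, Finsupp.multinomial_eq,
    Ideal.natCast_mul_mem_iff (Nat.multinomial_pos _ _).ne']
  calc (∀ m : Fin r →₀ ℕ, P.coeff m.degree ∈ _)
      ↔ ∀ d, P.coeff d ∈ Jd r d := by
        simp_rw [mem_Jd_iff hr]
        exact ⟨fun h d m hm => hm ▸ h m, fun h m => h _ m rfl⟩
    _ ↔ _ := by
        refine ⟨fun h => ⟨fun d _ => h d, fun d hd => by simpa [Jd_eq_bot hd] using h d⟩,
          fun ⟨hlt, hge⟩ d => ?_⟩
        rcases lt_or_ge d r with hd | hd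
        · exact hlt d hd
        · simp [Jd_eq_bot hd, hge d hd]
end

section
/- Let k be a field and R = k[[ϖ]][X] the polynomial ring over the formal power series ring k[[ϖ]]. Let (P_i)_{i∈I₁} and (Q_j)_{j∈I₂} be nonempty finite families of monic polynomials in R such that for all i ∈ I₁ and j ∈ I₂ the elements P_i and Q_j are relatively prime (every common divisor is a unit) and the quotient ring R/(P_i, Q_j) is finite-dimensional as a k-vector space. Then R/(∏_{i∈I₁} P_i, ∏_{j∈I₂} Q_j) is finite-dimensional over k and dim_k R/(∏_{i∈I₁} P_i, ∏_{j∈I₂} Q_j) = Σ_{i∈I₁} Σ_{j∈I₂} dim_k R/(P_i, Q_j). -/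
/-!
If `P` is prime to `Q₁`, multiplication by `Q₁` is injective modulo `P`, which gives a short
exact sequence `0 → R/(P, Q₂) → R/(P, Q₁Q₂) → R/(P, Q₁) → 0`. Hence the `k`-length of
`R/(P, Q)` is additive in `Q` among elements prime to `P`, and by symmetry in `P`; expanding
both products gives the double sum. Lengths take values in `ℕ∞`, so no finiteness is needed
until the end, where over a field the length is the dimension and is finite exactly for
finite-dimensional spaces.
-/

open Module Submodule

namespace Ideal

variable {R : Type*} [CommRing R]

theorem span_pair_mul_right_le (P Q₁ Q₂ : R) : span {P, Q₁ * Q₂} ≤ span {P, Q₁} := by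
  rw [span_le, Set.insert_subset_iff, Set.singleton_subset_iff]
  exact ⟨subset_span (by simp), mul_mem_right _ _ (subset_span (by simp))⟩

theorem span_pair_le_comap_mulLeft (P Q₁ Q₂ : R) :
    span {P, Q₂} ≤ Submodule.comap (LinearMap.mulLeft R Q₁) (span {P, Q₁ * Q₂}) := by
  intro x hx
  obtain ⟨a, b, rfl⟩ := mem_span_pair.mp hx
  exact mem_span_pair.mpr ⟨Q₁ * a, b, by simp only [LinearMap.mulLeft_apply]; ring⟩

abbrev mulLeftQuotSpanPair (P Q₁ Q₂ : R) :
    (R ⧸ span {P, Q₂}) →ₗ[R] R ⧸ span {P, Q₁ * Q₂} :=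
  mapQ _ _ (LinearMap.mulLeft R Q₁) (span_pair_le_comap_mulLeft P Q₁ Q₂)

theorem exact_mulLeftQuotSpanPair_factor (P Q₁ Q₂ : R) :
    Function.Exact (mulLeftQuotSpanPair P Q₁ Q₂)
      (factor (span_pair_mul_right_le P Q₁ Q₂)) := by
  intro y
  obtain ⟨r, rfl⟩ := Quotient.mk_surjective y
  constructor
  · intro hr
    obtain ⟨a, b, hab⟩ := mem_span_pair.mp (Quotient.eq_zero_iff_mem.mp hr)
    simp only [LinearMap.id_apply] at hab
    refine ⟨Quotient.mk _ b, (Quotient.mk_eq_mk_iff_sub_mem _ _).mpr ?_⟩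
    exact mem_span_pair.mpr
      ⟨-a, 0, by simp only [LinearMap.mulLeft_apply]; linear_combination -hab⟩
  · rintro ⟨x, hx⟩
    obtain ⟨b, rfl⟩ := Quotient.mk_surjective x
    rw [← hx]
    exact Quotient.eq_zero_iff_mem.mpr (mul_mem_right _ _ (subset_span (by simp)))

theorem injective_mulLeftQuotSpanPair [DecompositionMonoid R] {P Q₁ : R}
    (h : IsRelPrime P Q₁) (Q₂ : R) : Function.Injective (mulLeftQuotSpanPair P Q₁ Q₂) := by
  rw [← LinearMap.ker_eq_bot, LinearMap.ker_eq_bot']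
  intro x hx
  obtain ⟨r, rfl⟩ := Quotient.mk_surjective x
  obtain ⟨a, b, hab⟩ := mem_span_pair.mp (Quotient.eq_zero_iff_mem.mp hx)
  simp only [LinearMap.mulLeft_apply] at hab
  obtain ⟨c, hc⟩ := h.dvd_of_dvd_mul_left (z := r - b * Q₂) ⟨a, by linear_combination -hab⟩
  exact Quotient.eq_zero_iff_mem.mpr (mem_span_pair.mpr ⟨c, b, by linear_combination -hc⟩)

variable (k : Type*) [CommRing k] [Algebra k R]

theorem length_quotient_span_pair_mul_right [DecompositionMonoid R] {P Q₁ : R}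
    (h : IsRelPrime P Q₁) (Q₂ : R) :
    length k (R ⧸ span {P, Q₁ * Q₂}) =
      length k (R ⧸ span {P, Q₁}) + length k (R ⧸ span {P, Q₂}) := by
  rw [add_comm]
  exact length_eq_add_of_exact ((mulLeftQuotSpanPair P Q₁ Q₂).restrictScalars k)
    ((factor (span_pair_mul_right_le P Q₁ Q₂)).restrictScalars k)
    (injective_mulLeftQuotSpanPair h Q₂)
    (Quotient.factor_surjective (span_pair_mul_right_le P Q₁ Q₂))
    (exact_mulLeftQuotSpanPair_factor P Q₁ Q₂)

theorem length_quotient_span_pair_one (P : R) : length k (R ⧸ span {P, 1}) = 0 := by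
  rw [eq_top_of_isUnit_mem _ (subset_span (by simp)) isUnit_one]
  exact length_eq_zero

theorem length_quotient_span_pair_prod_right [DecompositionMonoid R] (P : R) {ι : Type*}
    (Q : ι → R) (s : Finset ι) (h : ∀ j ∈ s, IsRelPrime P (Q j)) :
    length k (R ⧸ span {P, ∏ j ∈ s, Q j}) = ∑ j ∈ s, length k (R ⧸ span {P, Q j}) := by
  induction s using Finset.cons_induction with
  | empty =>
    rw [Finset.prod_empty, Finset.sum_empty]
    exact length_quotient_span_pair_one k P
  | cons a s ha ih =>
    rw [Finset.prod_cons, Finset.sum_cons,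
      length_quotient_span_pair_mul_right k (h a (Finset.mem_cons_self a s)),
      ih fun j hj ↦ h j (Finset.mem_cons_of_mem hj)]

theorem length_quotient_span_pair_prod_left [DecompositionMonoid R] {ι : Type*}
    (P : ι → R) (Q : R) (s : Finset ι) (h : ∀ i ∈ s, IsRelPrime (P i) Q) :
    length k (R ⧸ span {∏ i ∈ s, P i, Q}) = ∑ i ∈ s, length k (R ⧸ span {P i, Q}) := by
  rw [Set.pair_comm, length_quotient_span_pair_prod_right k Q P s fun i hi ↦ (h i hi).symm]
  exact Finset.sum_congr rfl fun i _ ↦ by rw [Set.pair_comm]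

theorem length_quotient_span_pair_prod_prod [DecompositionMonoid R] {ι κ : Type*}
    (P : ι → R) (Q : κ → R) (s : Finset ι) (t : Finset κ)
    (h : ∀ i ∈ s, ∀ j ∈ t, IsRelPrime (P i) (Q j)) :
    length k (R ⧸ span {∏ i ∈ s, P i, ∏ j ∈ t, Q j}) =
      ∑ i ∈ s, ∑ j ∈ t, length k (R ⧸ span {P i, Q j}) := by
  rw [length_quotient_span_pair_prod_left k P _ s fun i hi ↦ IsRelPrime.prod_right (h i hi)]
  exact Finset.sum_congr rfl fun i hi ↦
    length_quotient_span_pair_prod_right k (P i) Q t (h i hi)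

end Ideal

theorem Module.finite_iff_length_ne_top (K M : Type*) [DivisionRing K] [AddCommGroup M]
    [Module K M] : Module.Finite K M ↔ length K M ≠ ⊤ := by
  rw [length_eq_rank, Cardinal.toENat_ne_top, rank_lt_aleph0_iff]

theorem Module.finrank_eq_toNat_length (K M : Type*) [DivisionRing K] [AddCommGroup M]
    [Module K M] : finrank K M = (length K M).toNat := by
  rw [length_eq_rank, Cardinal.toNat_toENat, finrank]

theorem finrank_quotient_prod_eq_sum_general (k : Type*) [Field k]
    (I₁ I₂ : Type*) [Fintype I₁] [Fintype I₂]
    (P : I₁ → Polynomial (PowerSeries k)) (Q : I₂ → Polynomial (PowerSeries k))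
    (hrel : ∀ i j, IsRelPrime (P i) (Q j))
    (hfin : ∀ i j, FiniteDimensional k
      (Polynomial (PowerSeries k) ⧸ Ideal.span ({P i, Q j} : Set (Polynomial (PowerSeries k))))) :
    FiniteDimensional k (Polynomial (PowerSeries k) ⧸
        Ideal.span ({∏ i, P i, ∏ j, Q j} : Set (Polynomial (PowerSeries k)))) ∧
    Module.finrank k (Polynomial (PowerSeries k) ⧸
        Ideal.span ({∏ i, P i, ∏ j, Q j} : Set (Polynomial (PowerSeries k)))) =
      ∑ i, ∑ j, Module.finrank k
        (Polynomial (PowerSeries k) ⧸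
          Ideal.span ({P i, Q j} : Set (Polynomial (PowerSeries k)))) := by
  have hlen := Ideal.length_quotient_span_pair_prod_prod k P Q Finset.univ Finset.univ
    fun i _ j _ ↦ hrel i j
  have hfin' i j := (finite_iff_length_ne_top k _).mp (hfin i j)
  have hrow i : ∑ j, length k (_ ⧸ Ideal.span {P i, Q j}) ≠ ⊤ :=
    ENat.sum_ne_top.mpr fun j _ ↦ hfin' i j
  refine ⟨(finite_iff_length_ne_top k _).mpr ?_, ?_⟩
  · rw [hlen]
    exact ENat.sum_ne_top.mpr fun i _ ↦ hrow i
  · simp only [finrank_eq_toNat_length, hlen, ENat.toNat_sum fun i _ ↦ hrow i]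
    exact Finset.sum_congr rfl fun i _ ↦ ENat.toNat_sum fun j _ ↦ hfin' i j

/-- Bilinearity of the intersection number: for nonempty finite families of monic
polynomials `(P_i)_{i∈I₁}`, `(Q_j)_{j∈I₂}` in `R = k⟦ϖ⟧[X]` with `P_i` and `Q_j`
relatively prime and `R/(P_i, Q_j)` finite-dimensional over `k` for all `i, j`, the
quotient `R/(∏ P_i, ∏ Q_j)` is finite-dimensional over `k` of dimension
`Σ_{i,j} dim_k R/(P_i, Q_j)`. -/
theorem finrank_quotient_prod_eq_sum (k : Type*) [Field k]
    (I₁ I₂ : Type*) [Fintype I₁] [Fintype I₂] [Nonempty I₁] [Nonempty I₂]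
    (P : I₁ → Polynomial (PowerSeries k)) (Q : I₂ → Polynomial (PowerSeries k))
    (hPm : ∀ i, (P i).Monic) (hQm : ∀ j, (Q j).Monic)
    (hrel : ∀ i j, IsRelPrime (P i) (Q j))
    (hfin : ∀ i j, FiniteDimensional k
      (Polynomial (PowerSeries k) ⧸ Ideal.span ({P i, Q j} : Set (Polynomial (PowerSeries k))))) :
    FiniteDimensional k (Polynomial (PowerSeries k) ⧸
        Ideal.span ({∏ i, P i, ∏ j, Q j} : Set (Polynomial (PowerSeries k)))) ∧
    Module.finrank k (Polynomial (PowerSeries k) ⧸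
        Ideal.span ({∏ i, P i, ∏ j, Q j} : Set (Polynomial (PowerSeries k)))) =
      ∑ i, ∑ j, Module.finrank k
        (Polynomial (PowerSeries k) ⧸
          Ideal.span ({P i, Q j} : Set (Polynomial (PowerSeries k)))) :=
  finrank_quotient_prod_eq_sum_general k I₁ I₂ P Q hrel hfin
end
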